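/- arXiv:2511.07154 — 2 statements merged into one kernel-verified Lean document; each statement's English description precedes it below -/
import Mathlib

section
/- Let z ≥ 1 and ν ≥ 1 be integers. For every positive integer n with n ≤ 2 z^ν, the von Mangoldt function satisfies Λ(n) = ∑_{j=1}^{ν} (-1)^{j-1} binom(ν, j) ∑_{n₁ n₂ ⋯ n_{2j} = n, n_{j+1} ≤ z, ..., n_{2j} ≤ z} (log n₁) μ(n_{j+1}) ⋯ μ(n_{2j}). -/
/-!
Write `M` for the Möbius function truncated to `[1, z]` and `*` for Dirichlet convolution.
Then `1 - ζ * M` vanishes on `[1, z]`, so `(1 - ζ * M) ^ ν` vanishes below `(z + 1) ^ ν` and,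
since `Λ` vanishes below `2`, `Λ * (1 - ζ * M) ^ ν` vanishes below `2 (z + 1) ^ ν > 2 z ^ ν`.
Hence `Λ(n) = (Λ * (1 - (1 - ζ * M) ^ ν))(n)`; expanding the binomial and using `Λ * ζ = log`,
the `j`-th term is `(log * ζ ^ (j - 1) * M ^ j)(n)`, a sum over factorizations
`n = n₁ ⋯ n_{2j}`.
-/

open Finset
open scoped ArithmeticFunction.zeta ArithmeticFunction.Moebius

theorem one_sub_one_sub_pow_eq_sum {R A : Type*} [CommRing R] [CommRing A] [Algebra R A]
    (x : A) (ν : ℕ) :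
    1 - (1 - x) ^ ν = ∑ j ∈ range ν, ((-1) ^ j * ν.choose (j + 1) : R) • x ^ (j + 1) := by
  rw [show 1 - x = -x + 1 by ring, add_pow, sum_range_succ']
  simp only [pow_zero, one_pow, mul_one, Nat.choose_zero_right, Nat.cast_one, sub_add_cancel_right,
    ← sum_neg_distrib]
  refine sum_congr rfl fun j _ => ?_
  rw [Algebra.smul_def]
  push_cast
  ring

namespace Nat

theorem sum_finMulAntidiag_succ {M : Type*} [AddCommMonoid M] (k n : ℕ)
    (g : (Fin (k + 1) → ℕ) → M) :
    ∑ d ∈ finMulAntidiag (k + 1) n, g d =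
      ∑ x ∈ divisorsAntidiagonal n, ∑ e ∈ finMulAntidiag k x.2, g (Fin.cons x.1 e) := by
  rw [sum_sigma']
  symm
  refine sum_nbij' (fun p => Fin.cons p.1.1 p.2)
    (fun d => ⟨(d 0, ∏ i : Fin k, d i.succ), Fin.tail d⟩) ?_ ?_ ?_ ?_ ?_
  · rintro ⟨⟨a, b⟩, e⟩ h
    simp_all [Fin.prod_univ_succ]
  · intro d h
    rw [mem_finMulAntidiag, Fin.prod_univ_succ] at h
    simp only [mem_sigma, mem_divisorsAntidiagonal, mem_finMulAntidiag]
    exact ⟨h, rfl, right_ne_zero_of_mul (h.1 ▸ h.2)⟩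
  · rintro ⟨⟨a, b⟩, e⟩ h
    simp_all
  · intro d _
    exact Fin.cons_self_tail d
  · intro p _
    rfl

theorem finMulAntidiag_eq_filter_piFinset_Icc {k n : ℕ} (hn : n ≠ 0) :
    finMulAntidiag k n = (Fintype.piFinset fun _ => Icc 1 n).filter (fun d => ∏ i, d i = n) := by
  ext d
  rw [mem_filter, Fintype.mem_piFinset]
  refine ⟨fun hd => ⟨fun i => mem_Icc.2 ⟨pos_of_ne_zero (ne_zero_of_mem_finMulAntidiag hd i),
    le_of_dvd (pos_of_ne_zero hn) (dvd_of_mem_finMulAntidiag hd i)⟩,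
    prod_eq_of_mem_finMulAntidiag hd⟩, fun h => mem_finMulAntidiag.2 ⟨h.2, hn⟩⟩

end Nat

namespace ArithmeticFunction

variable {R : Type*}

theorem sum_apply [AddCommMonoid R] {ι : Type*} (s : Finset ι) (f : ι → ArithmeticFunction R)
    (n : ℕ) :
    (∑ i ∈ s, f i) n = ∑ i ∈ s, f i n := by
  induction s using Finset.cons_induction <;> simp [*]

theorem sub_apply [AddGroup R] (f g : ArithmeticFunction R) (n : ℕ) : (f - g) n = f n - g n := by
  simp [sub_eq_add_neg]

theorem prod_apply [CommSemiring R] {k : ℕ} (f : Fin k → ArithmeticFunction R) (n : ℕ) :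
    (∏ i, f i) n = ∑ d ∈ Nat.finMulAntidiag k n, ∏ i, f i (d i) := by
  induction k generalizing n with
  | zero =>
    rcases eq_or_ne n 1 with rfl | hn
    · simp [Nat.finMulAntidiag_one]
    · simp [Nat.finMulAntidiag_zero_left hn, one_apply_ne hn]
  | succ k ih =>
    simp only [Fin.prod_univ_succ, mul_apply, ih, mul_sum, Nat.sum_finMulAntidiag_succ,
      Fin.cons_zero, Fin.cons_succ]

theorem mul_apply_eq_zero_of_lt [Semiring R] {f g : ArithmeticFunction R} {a b : ℕ}
    (hf : ∀ m < a, f m = 0) (hg : ∀ m < b, g m = 0) : ∀ m < a * b, (f * g) m = 0 := by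
  intro m hm
  rw [mul_apply]
  refine sum_eq_zero fun x hx => ?_
  rw [Nat.mem_divisorsAntidiagonal] at hx
  rcases lt_or_ge x.1 a with h1 | h1
  · rw [hf _ h1, zero_mul]
  · have h2 : x.2 < b := by
      by_contra! h2
      exact (hm.trans_le (hx.1 ▸ Nat.mul_le_mul h1 h2)).false
    rw [hg _ h2, mul_zero]

theorem pow_apply_eq_zero_of_lt [Semiring R] {f : ArithmeticFunction R} {a : ℕ}
    (hf : ∀ m < a, f m = 0) (k : ℕ) : ∀ m < a ^ k, (f ^ k) m = 0 := by
  induction k with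
  | zero =>
    intro m hm
    obtain rfl : m = 0 := by simpa using hm
    simp
  | succ k ih => exact mul_apply_eq_zero_of_lt ih hf

def truncate [Zero R] (f : ArithmeticFunction R) (z : ℕ) : ArithmeticFunction R :=
  ⟨fun m => if m ≤ z then f m else 0, by simp⟩

theorem truncate_apply [Zero R] (f : ArithmeticFunction R) (z m : ℕ) :
    f.truncate z m = if m ≤ z then f m else 0 := rfl

theorem mul_truncate_apply_of_le [Semiring R] (f g : ArithmeticFunction R) {z m : ℕ}
    (hm : m ≤ z) : (g * f.truncate z) m = (g * f) m := by
  simp only [mul_apply]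
  refine sum_congr rfl fun x hx => ?_
  have hx : x.2 ≤ m := Nat.divisor_le (Nat.snd_mem_divisors_of_mem_antidiagonal hx)
  rw [truncate_apply, if_pos (hx.trans hm)]

theorem one_sub_zeta_mul_truncate_moebius_apply [Ring R] {z m : ℕ} (hm : m < z + 1) :
    (1 - ζ * (μ : ArithmeticFunction R).truncate z) m = 0 := by
  rw [sub_apply, mul_truncate_apply_of_le _ _ (Nat.lt_succ_iff.1 hm), coe_zeta_mul_coe_moebius,
    sub_self]

end ArithmeticFunction

open ArithmeticFunction

noncomputable def heathBrownFactor (z j i : ℕ) : ArithmeticFunction ℝ :=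
  if i = 0 then log else if i ≤ j then ζ else (μ : ArithmeticFunction ℝ).truncate z

theorem prod_heathBrownFactor (z j : ℕ) :
    ∏ i : Fin (2 * (j + 1)), heathBrownFactor z j i =
      log * ζ ^ j * (μ : ArithmeticFunction ℝ).truncate z ^ (j + 1) := by
  have hζ : ∀ k ∈ range j, heathBrownFactor z j (k + 1) = ζ := fun k hk => by
    simp [heathBrownFactor, Nat.succ_le_of_lt (mem_range.1 hk)]
  have hμ : ∀ k ∈ range (j + 1), heathBrownFactor z j (j + 1 + k) =
      (μ : ArithmeticFunction ℝ).truncate z := fun k _ => by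
    rw [heathBrownFactor, if_neg (by omega), if_neg (by omega)]
  rw [Fin.prod_univ_eq_prod_range (heathBrownFactor z j), two_mul, prod_range_add,
    prod_range_succ', prod_congr rfl hζ, prod_congr rfl hμ, prod_const, prod_const, card_range,
    card_range, mul_comm _ (heathBrownFactor z j 0)]
  simp [heathBrownFactor]

theorem prod_heathBrownFactor_apply (z j : ℕ) {d : Fin (2 * (j + 1)) → ℕ} (hd : ∀ i, d i ≠ 0) :
    ∏ i : Fin (2 * (j + 1)), heathBrownFactor z j i (d i) =
      if ∀ i : Fin (2 * (j + 1)), j + 1 ≤ (i : ℕ) → d i ≤ z then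
        Real.log (d ⟨0, by omega⟩) *
          ∏ i ∈ univ.filter (fun i : Fin (2 * (j + 1)) => j + 1 ≤ (i : ℕ)), (μ (d i) : ℝ)
      else 0 := by
  rw [← prod_filter_mul_prod_filter_not univ (fun i : Fin (2 * (j + 1)) => j + 1 ≤ (i : ℕ)),
    mul_comm]
  have hlow : ∏ i ∈ univ.filter (fun i : Fin (2 * (j + 1)) => ¬ j + 1 ≤ (i : ℕ)),
      heathBrownFactor z j i (d i) = Real.log (d ⟨0, by omega⟩) := by
    refine (prod_eq_single_of_mem ⟨0, by omega⟩ (by simp) fun i hi hi0 => ?_).trans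
      (by simp [heathBrownFactor])
    have hi : ¬j + 1 ≤ (i : ℕ) := (mem_filter.1 hi).2
    rw [heathBrownFactor, if_neg (fun h => hi0 (Fin.ext h)), if_pos (by omega), natCoe_apply,
      zeta_apply, if_neg (hd i), Nat.cast_one]
  have hhigh : ∏ i ∈ univ.filter (fun i : Fin (2 * (j + 1)) => j + 1 ≤ (i : ℕ)),
      heathBrownFactor z j i (d i) =
        ∏ i ∈ univ.filter (fun i : Fin (2 * (j + 1)) => j + 1 ≤ (i : ℕ)),
          if d i ≤ z then (μ (d i) : ℝ) else 0 := by
    refine prod_congr rfl fun i hi => ?_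
    have hi : j + 1 ≤ (i : ℕ) := (mem_filter.1 hi).2
    rw [heathBrownFactor, if_neg (by omega), if_neg (by omega), truncate_apply, intCoe_apply]
  rw [hlow, hhigh, prod_ite_zero, mul_ite, mul_zero]
  simp

theorem log_mul_zeta_pow_mul_truncate_moebius_pow_apply (z j : ℕ) {n : ℕ} (hn : n ≠ 0) :
    (log * ζ ^ j * (μ : ArithmeticFunction ℝ).truncate z ^ (j + 1)) n =
      ∑ f ∈ (Fintype.piFinset (fun _ : Fin (2 * (j + 1)) => Icc 1 n)).filter
          (fun f => (∏ i, f i) = n ∧ ∀ i : Fin (2 * (j + 1)), j + 1 ≤ (i : ℕ) → f i ≤ z),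
        Real.log (f ⟨0, by omega⟩) *
          ∏ i ∈ univ.filter (fun i : Fin (2 * (j + 1)) => j + 1 ≤ (i : ℕ)), (μ (f i) : ℝ) := by
  rw [← prod_heathBrownFactor, ArithmeticFunction.prod_apply, sum_congr rfl fun d hd =>
      prod_heathBrownFactor_apply z j (Nat.ne_zero_of_mem_finMulAntidiag hd), ← sum_filter,
    Nat.finMulAntidiag_eq_filter_piFinset_Icc hn, filter_filter]

theorem stmt4 (z ν : ℕ) (hν : 1 ≤ ν) (n : ℕ) (hn : 0 < n)
    (hn2 : n ≤ 2 * z ^ ν) :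
    (ArithmeticFunction.vonMangoldt n : ℝ) =
      ∑ j ∈ Finset.range ν, (-1 : ℝ) ^ j * (ν.choose (j + 1)) *
        ∑ f ∈ (Fintype.piFinset (fun _ : Fin (2 * (j + 1)) => Finset.Icc 1 n)).filter
          (fun f => (∏ i, f i) = n ∧ ∀ i : Fin (2 * (j + 1)), j + 1 ≤ (i : ℕ) → f i ≤ z),
          Real.log (f ⟨0, by omega⟩) *
            ∏ i ∈ Finset.univ.filter (fun i : Fin (2 * (j + 1)) => j + 1 ≤ (i : ℕ)),
              (ArithmeticFunction.moebius (f i) : ℝ) := by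
  set M : ArithmeticFunction ℝ := (μ : ArithmeticFunction ℝ).truncate z
  have hΛ : (Λ : ArithmeticFunction ℝ) =
      ∑ j ∈ range ν, ((-1) ^ j * ν.choose (j + 1) : ℝ) • (log * ζ ^ j * M ^ (j + 1)) +
        Λ * (1 - ζ * M) ^ ν := by
    have hterm (j : ℕ) :
        (Λ : ArithmeticFunction ℝ) * (ζ * M) ^ (j + 1) = log * ζ ^ j * M ^ (j + 1) := by
      rw [← vonMangoldt_mul_zeta]; ring
    calc (Λ : ArithmeticFunction ℝ)
        = Λ * (1 - (1 - ζ * M) ^ ν) + Λ * (1 - ζ * M) ^ ν := by ring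
      _ = _ := by simp only [one_sub_one_sub_pow_eq_sum (R := ℝ), mul_sum, mul_smul_comm, hterm]
  have htail : (Λ * (1 - ζ * M) ^ ν) n = 0 := by
    refine mul_apply_eq_zero_of_lt (a := 2) (fun m hm => ?_)
      (pow_apply_eq_zero_of_lt (fun m hm => one_sub_zeta_mul_truncate_moebius_apply hm) ν) n ?_
    · interval_cases m <;> simp
    · calc n ≤ 2 * z ^ ν := hn2
        _ < 2 * (z + 1) ^ ν := by gcongr; omega
  rw [hΛ, ArithmeticFunction.add_apply, htail, add_zero, ArithmeticFunction.sum_apply]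
  refine sum_congr rfl fun j _ => ?_
  rw [smul_map, log_mul_zeta_pow_mul_truncate_moebius_pow_apply z j hn.ne', smul_eq_mul]
end

section
/- Let s ≥ 2 be an integer, Δ > 0, and let a₁, …, a_s be real numbers not all of whose contributions vanish (a₁⋯a_s ≠ 0). Let α₁, …, α_s be distinct real numbers, none of which is an integer. If I is a subinterval of [1,2] on which |a₁ t^{α₁} + a₂ t^{α₂} + ⋯ + a_s t^{α_s}| ≤ Δ for all t ∈ I, then the length of I satisfies |I| ≪ (Δ / (|a₁| + ⋯ + |a_s|))^{1/(s-1)}, where the implied constant depends only on s and α₁, …, α_s. -/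
/-!
At the points `t_k = c e^{kh}`, `k = 0, …, s-1`, `h = log (d / c) / (s-1)`, the sum is the power
sum `∑_j b_j x_j^k` with `b_j = a_j c^{α_j}`, `x_j = e^{α_j h}`, bounded by `Δ`. Applying the
difference operators `E - x_l`, `l ≠ j` (`E` the shift `k ↦ k + 1`), kills every term but the
`j`-th and costs at most a factor `∏ (1 + |x_l|)`, so `|b_j| ∏_{l ≠ j} |x_j - x_l| ≪ Δ`.
As `|x_j - x_l| ≫ |α_j - α_l| h` and `d - c ≪ (s-1) h`, this gives `|a_j| (d - c)^(s-1) ≪ Δ`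
for every `j`.
-/

open Finset Real

variable {ι : Type*} [Fintype ι]

/-- `∏_{l ∈ T} (E - x l)` applied to the power sum `k ↦ ∑ i, b i * x i ^ k`. -/
def powerSumDiff (b x : ι → ℝ) (T : Finset ι) (k : ℕ) : ℝ :=
  ∑ i, b i * (∏ l ∈ T, (x i - x l)) * x i ^ k

lemma powerSumDiff_empty (b x : ι → ℝ) (k : ℕ) :
    powerSumDiff b x ∅ k = ∑ i, b i * x i ^ k := by
  simp [powerSumDiff]

lemma powerSumDiff_insert [DecidableEq ι] (b x : ι → ℝ) {T : Finset ι} {l : ι} (hl : l ∉ T)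
    (k : ℕ) :
    powerSumDiff b x (insert l T) k = powerSumDiff b x T (k + 1) - x l * powerSumDiff b x T k := by
  simp only [powerSumDiff, prod_insert hl, mul_sum, ← sum_sub_distrib]
  exact sum_congr rfl fun i _ => by ring

lemma powerSumDiff_univ_erase [DecidableEq ι] (b x : ι → ℝ) (j : ι) (k : ℕ) :
    powerSumDiff b x (univ.erase j) k = b j * (∏ l ∈ univ.erase j, (x j - x l)) * x j ^ k := by
  rw [powerSumDiff, sum_eq_single j]
  · intro i _ hij
    rw [prod_eq_zero (mem_erase.2 ⟨hij, mem_univ i⟩) (sub_self _), mul_zero, zero_mul]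
  · simp

lemma abs_powerSumDiff_le {b x : ι → ℝ} {N : ℕ} {Δ : ℝ}
    (hΔ : ∀ k ≤ N, |∑ i, b i * x i ^ k| ≤ Δ) (T : Finset ι) {k : ℕ} (hk : k + #T ≤ N) :
    |powerSumDiff b x T k| ≤ (∏ l ∈ T, (1 + |x l|)) * Δ := by
  classical
  induction T using Finset.induction_on generalizing k with
  | empty => simpa [powerSumDiff_empty] using hΔ k (by simpa using hk)
  | insert l T hl ih =>
    rw [card_insert_of_notMem hl] at hk
    have h₁ := ih (k := k + 1) (by omega)
    have h₀ := ih (k := k) (by omega)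
    rw [powerSumDiff_insert b x hl, prod_insert hl]
    calc _ ≤ |powerSumDiff b x T (k + 1)| + |x l| * |powerSumDiff b x T k| := by
          rw [← abs_mul]; exact abs_sub _ _
      _ ≤ (∏ l ∈ T, (1 + |x l|)) * Δ + |x l| * ((∏ l ∈ T, (1 + |x l|)) * Δ) := by gcongr
      _ = _ := by ring

lemma abs_mul_prod_abs_sub_le [DecidableEq ι] {b x : ι → ℝ} {Δ : ℝ}
    (hΔ : ∀ k ≤ Fintype.card ι - 1, |∑ i, b i * x i ^ k| ≤ Δ) (j : ι) :
    |b j| * ∏ l ∈ univ.erase j, |x j - x l| ≤ (∏ l ∈ univ.erase j, (1 + |x l|)) * Δ := by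
  have := abs_powerSumDiff_le hΔ (univ.erase j) (k := 0) (by simp [card_erase_of_mem])
  rwa [powerSumDiff_univ_erase, pow_zero, mul_one, abs_mul, abs_prod] at this

lemma abs_sub_mul_exp_min_le (y z : ℝ) : |y - z| * exp (min y z) ≤ |exp y - exp z| := by
  wlog hzy : z ≤ y generalizing y z
  · rw [abs_sub_comm, min_comm, abs_sub_comm (exp y)]
    exact this z y (le_of_not_ge hzy)
  rw [min_eq_right hzy, abs_of_nonneg (sub_nonneg.2 hzy),
    abs_of_nonneg (sub_nonneg.2 (exp_le_exp.2 hzy))]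
  calc (y - z) * exp z ≤ (exp (y - z) - 1) * exp z := by
        gcongr ?_ * _; linarith [add_one_le_exp (y - z)]
    _ = exp y - exp z := by rw [sub_mul, ← exp_add, sub_add_cancel, one_mul]

lemma abs_mul_le_of_abs_le_one {y u A : ℝ} (hy : |y| ≤ A) (hu : |u| ≤ 1) : |y * u| ≤ A := by
  rw [abs_mul]
  nlinarith [abs_nonneg y, abs_nonneg u]

lemma abs_mul_prod_le_of_abs_sum_exp_le [DecidableEq ι] {α a : ι → ℝ} {A u₀ h Δ : ℝ}
    (hA : ∀ i, |α i| ≤ A) (hu₀ : |u₀| ≤ 1) (hh₀ : 0 ≤ h) (hh₁ : h ≤ 1)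
    (hΔ : ∀ k ≤ Fintype.card ι - 1, |∑ i, a i * exp (α i * (u₀ + k * h))| ≤ Δ) (j : ι) :
    |a j| * exp (-A) * ∏ l ∈ univ.erase j, (|α j - α l| * h * exp (-A)) ≤
      (1 + exp A) ^ (Fintype.card ι - 1) * Δ := by
  set b : ι → ℝ := fun i => a i * exp (α i * u₀)
  set x : ι → ℝ := fun i => exp (α i * h)
  have hαu₀ i : |α i * u₀| ≤ A := abs_mul_le_of_abs_le_one (hA i) hu₀
  have hαh i : |α i * h| ≤ A := abs_mul_le_of_abs_le_one (hA i) (abs_le.2 ⟨by linarith, hh₁⟩)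
  have hpow (k : ℕ) : ∑ i, a i * exp (α i * (u₀ + k * h)) = ∑ i, b i * x i ^ k := by
    refine sum_congr rfl fun i _ => ?_
    rw [← exp_nat_mul, mul_assoc, ← exp_add]
    ring_nf
  have hcore := abs_mul_prod_abs_sub_le (b := b) (x := x) (fun k hk => hpow k ▸ hΔ k hk) j
  have hΔ₀ : 0 ≤ Δ := (abs_nonneg _).trans (hΔ 0 (Nat.zero_le _))
  have hb : |a j| * exp (-A) ≤ |b j| := by
    rw [abs_mul, abs_of_pos (exp_pos _)]
    gcongr
    exact (abs_le.1 (hαu₀ j)).1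
  have hx l : |α j - α l| * h * exp (-A) ≤ |x j - x l| := by
    calc |α j - α l| * h * exp (-A) ≤ |α j * h - α l * h| * exp (min (α j * h) (α l * h)) := by
          rw [← sub_mul, abs_mul, abs_of_nonneg hh₀]
          gcongr
          exact le_min (abs_le.1 (hαh j)).1 (abs_le.1 (hαh l)).1
      _ ≤ |x j - x l| := abs_sub_mul_exp_min_le _ _
  have hx_le l : |x l| ≤ exp A := by
    rw [abs_of_pos (exp_pos _)]
    exact exp_le_exp.2 (abs_le.1 (hαh l)).2
  calc _ ≤ |b j| * ∏ l ∈ univ.erase j, |x j - x l| := by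
        gcongr with l
        exact hx l
    _ ≤ (∏ l ∈ univ.erase j, (1 + |x l|)) * Δ := hcore
    _ ≤ (∏ _l ∈ univ.erase j, (1 + exp A)) * Δ := by
        gcongr with l
        exact hx_le l
    _ = (1 + exp A) ^ (Fintype.card ι - 1) * Δ := by
        rw [prod_const, card_erase_of_mem (mem_univ j), card_univ]

theorem exists_sum_abs_mul_pow_le_of_abs_sum_exp_le [Nonempty ι] {α : ι → ℝ}
    (hα : Function.Injective α) :
    ∃ K : ℝ, 0 < K ∧ ∀ (a : ι → ℝ) (u₀ h Δ : ℝ), |u₀| ≤ 1 → 0 ≤ h → h ≤ 1 →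
      (∀ k ≤ Fintype.card ι - 1, |∑ i, a i * exp (α i * (u₀ + k * h))| ≤ Δ) →
      (∑ i, |a i|) * h ^ (Fintype.card ι - 1) ≤ K * Δ := by
  classical
  set n := Fintype.card ι - 1
  set A := ∑ i, |α i|
  have hA i : |α i| ≤ A := single_le_sum (fun i _ => abs_nonneg (α i)) (mem_univ i)
  set ρ : ι → ℝ := fun j => exp (-A) ^ (n + 1) * ∏ l ∈ univ.erase j, |α j - α l|
  have hρ j : 0 < ρ j := mul_pos (by positivity) <| prod_pos fun l hl =>
    abs_pos.2 (sub_ne_zero.2 (hα.ne (ne_of_mem_erase hl).symm))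
  refine ⟨∑ j, (1 + exp A) ^ n / ρ j, sum_pos (fun j _ => div_pos (by positivity) (hρ j))
    univ_nonempty, fun a u₀ h Δ hu₀ hh₀ hh₁ hΔ => ?_⟩
  rw [sum_mul, sum_mul]
  refine sum_le_sum fun j _ => ?_
  rw [div_mul_eq_mul_div, le_div_iff₀ (hρ j)]
  calc |a j| * h ^ n * ρ j
      = |a j| * exp (-A) * ∏ l ∈ univ.erase j, (|α j - α l| * h * exp (-A)) := by
        simp only [ρ, prod_mul_distrib, prod_const, card_erase_of_mem (mem_univ j), card_univ]
        ring
    _ ≤ _ := abs_mul_prod_le_of_abs_sum_exp_le hA hu₀ hh₀ hh₁ hΔ j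

lemma exp_log_add_mul_mem_Icc {c d : ℝ} (hc : 0 < c) (hcd : c ≤ d) {n k : ℕ} (hn : 0 < n)
    (hk : k ≤ n) : exp (log c + k * ((log d - log c) / n)) ∈ Set.Icc c d := by
  have hlog : 0 ≤ log d - log c := sub_nonneg.2 (log_le_log hc hcd)
  have hkn : (k : ℝ) / n ≤ 1 := div_le_one_of_le₀ (by exact_mod_cast hk) (by positivity)
  have hstep : 0 ≤ (log d - log c) * (k / n) := mul_nonneg hlog (by positivity)
  rw [mul_div_left_comm]
  constructor
  · calc c = exp (log c) := (exp_log hc).symm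
      _ ≤ _ := by gcongr; linarith
  · calc _ ≤ exp (log c + (log d - log c)) := by gcongr; nlinarith
      _ = d := by rw [add_sub_cancel, exp_log (hc.trans_le hcd)]

lemma sub_le_mul_log_sub_log {c d : ℝ} (hc : 0 < c) (hd : 0 < d) :
    d - c ≤ d * (log d - log c) := by
  have := one_sub_inv_le_log_of_pos (div_pos hd hc)
  rw [log_div hd.ne' hc.ne', inv_div] at this
  calc d - c = d * (1 - c / d) := by field_simp
    _ ≤ d * (log d - log c) := by gcongr

theorem stmt5_general (s : ℕ) (hs : 2 ≤ s) (α : Fin s → ℝ) (hinj : Function.Injective α) :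
    ∃ K : ℝ, 0 < K ∧ ∀ (a : Fin s → ℝ), (∀ j, a j ≠ 0) → ∀ Δ : ℝ, 0 < Δ →
      ∀ c d : ℝ, 1 ≤ c → c ≤ d → d ≤ 2 →
        (∀ t ∈ Set.Icc c d, |∑ j, a j * t ^ (α j)| ≤ Δ) →
        d - c ≤ K * (Δ / ∑ j, |a j|) ^ (1 / ((s : ℝ) - 1)) := by
  have : Nonempty (Fin s) := ⟨⟨0, by omega⟩⟩
  obtain ⟨K, hK, hbound⟩ := exists_sum_abs_mul_pow_le_of_abs_sum_exp_le hinj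
  rw [Fintype.card_fin] at hbound
  have hs₁ : ((s - 1 : ℕ) : ℝ) = s - 1 := by rw [Nat.cast_sub (by omega), Nat.cast_one]
  have hs₀ : (0 : ℝ) < s - 1 := by rw [← hs₁]; exact_mod_cast (by omega : 0 < s - 1)
  refine ⟨2 * (s - 1) * K ^ (1 / ((s : ℝ) - 1)), by positivity, ?_⟩
  intro a ha Δ hΔ c d hc hcd hd hf
  have hS : 0 < ∑ j, |a j| := sum_pos (fun j _ => abs_pos.2 (ha j)) univ_nonempty
  have hc₀ : 0 < c := by linarith
  have hlog : 0 ≤ log d - log c := sub_nonneg.2 (log_le_log hc₀ hcd)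
  set h := (log d - log c) / ((s - 1 : ℕ) : ℝ)
  have hh₀ : 0 ≤ h := by positivity
  have hh₁ : h ≤ 1 := by
    refine div_le_one_of_le₀ ?_ (by positivity)
    have : (1 : ℝ) ≤ (s - 1 : ℕ) := by exact_mod_cast (by omega : 1 ≤ s - 1)
    linarith [log_le_sub_one_of_pos (hc₀.trans_le hcd), log_nonneg hc]
  have hlogc : |log c| ≤ 1 := by
    rw [abs_of_nonneg (log_nonneg hc)]
    linarith [log_le_sub_one_of_pos hc₀]
  have hpow : (∑ j, |a j|) * h ^ (s - 1) ≤ K * Δ := by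
    refine hbound a (log c) h Δ hlogc hh₀ hh₁ fun k hk => ?_
    have := hf _ (exp_log_add_mul_mem_Icc hc₀ hcd (by omega) hk)
    simpa only [← exp_mul, mul_comm (α _)] using this
  have hroot : h ≤ (K * Δ / ∑ j, |a j|) ^ (1 / ((s : ℝ) - 1)) := by
    rw [one_div, le_rpow_inv_iff_of_pos hh₀ (by positivity) hs₀, ← hs₁, rpow_natCast,
      le_div_iff₀ hS, mul_comm]
    exact hpow
  calc d - c ≤ d * (log d - log c) := sub_le_mul_log_sub_log hc₀ (hc₀.trans_le hcd)
    _ ≤ 2 * ((s - 1) * h) := by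
        rw [← hs₁, mul_div_cancel₀ _ (by rw [hs₁]; exact hs₀.ne')]
        gcongr
    _ ≤ 2 * ((s - 1) * (K * Δ / ∑ j, |a j|) ^ (1 / ((s : ℝ) - 1))) := by gcongr
    _ = _ := by rw [mul_div_assoc, mul_rpow hK.le (by positivity)]; ring

theorem stmt5 (s : ℕ) (hs : 2 ≤ s) (α : Fin s → ℝ) (hinj : Function.Injective α)
    (hint : ∀ j, ∀ m : ℤ, α j ≠ (m : ℝ)) :
    ∃ K : ℝ, 0 < K ∧ ∀ (a : Fin s → ℝ), (∀ j, a j ≠ 0) → ∀ Δ : ℝ, 0 < Δ →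
      ∀ c d : ℝ, 1 ≤ c → c ≤ d → d ≤ 2 →
        (∀ t ∈ Set.Icc c d, |∑ j, a j * t ^ (α j)| ≤ Δ) →
        d - c ≤ K * (Δ / ∑ j, |a j|) ^ (1 / ((s : ℝ) - 1)) :=
  stmt5_general s hs α hinj
end
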